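/- arXiv:1609.05776 — 2 statements merged into one kernel-verified Lean document; each statement's English description precedes it below -/
import Mathlib

section
/- (Lebesgue) Let p be a prime with p ≡ 7 (mod 8). Then ΣN − ΣR = p·(R_b(p) − N_b(p)), where ΣR and ΣN are the sums of all quadratic residues and non-residues of p in [1, p−1], and R_b(p), N_b(p) count the residues and non-residues in [1, (p−1)/2]. -/
/-!
Let `χ` be the Legendre symbol, `h = (p - 1) / 2`, `T = ∑_{y ≤ h} χ y * y` and
`U = ∑_{y ≤ h} χ y`. Residues are where `χ = 1` and non-residues where `χ = -1`, so the
claim reads `∑_{y < p} χ y * y = -p * U`. Since `p ≡ 3 (mod 4)`, `χ (p - y) = -χ y`, and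
pairing `y` with `p - y` gives `∑_{y < p} χ y * y = 2T - pU`. Since also `χ 2 = 1`,
splitting `[1, p - 1]` into the even numbers `2k` and the odd numbers `p - 2k` (`1 ≤ k ≤ h`)
gives `4T - pU`. Hence `T = 0`.
-/

open Finset

theorem sum_Icc_two_mul_eq_sum_Icc_add_reflect {M : Type*} [AddCommMonoid M] (g : ℤ → M)
    (h : ℤ) : ∑ y ∈ Icc 1 (2 * h), g y = ∑ k ∈ Icc 1 h, (g k + g (2 * h + 1 - k)) := by
  have hsplit : Icc 1 (2 * h) = Icc 1 h ∪ (Icc 1 h).image (2 * h + 1 - ·) := by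
    ext y
    simp only [mem_union, mem_image, mem_Icc]
    constructor
    · intro hy
      by_cases hyh : y ≤ h
      · exact .inl ⟨hy.1, hyh⟩
      · exact .inr ⟨2 * h + 1 - y, by omega, by omega⟩
    · rintro (hy | ⟨k, hk, rfl⟩) <;> omega
  have hdisj : Disjoint (Icc 1 h) ((Icc 1 h).image (2 * h + 1 - ·)) := by
    simp only [disjoint_left, mem_image, mem_Icc]
    rintro y hy ⟨k, hk, rfl⟩
    omega
  rw [hsplit, sum_union hdisj, sum_image fun a _ b _ hab => by simpa using hab, sum_add_distrib]

theorem sum_Icc_two_mul_eq_sum_Icc_even_add_odd {M : Type*} [AddCommMonoid M] (g : ℤ → M)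
    (h : ℤ) :
    ∑ y ∈ Icc 1 (2 * h), g y = ∑ k ∈ Icc 1 h, (g (2 * k) + g (2 * h + 1 - 2 * k)) := by
  have hsplit :
      Icc 1 (2 * h) = (Icc 1 h).image (2 * ·) ∪ (Icc 1 h).image (2 * h + 1 - 2 * ·) := by
    ext y
    simp only [mem_union, mem_image, mem_Icc]
    constructor
    · intro hy
      obtain ⟨k, rfl | rfl⟩ := Int.even_or_odd' y
      · exact .inl ⟨k, by omega, rfl⟩
      · exact .inr ⟨h - k, by omega, by omega⟩
    · rintro (⟨k, hk, rfl⟩ | ⟨k, hk, rfl⟩) <;> omega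
  have hdisj : Disjoint ((Icc 1 h).image (2 * ·)) ((Icc 1 h).image (2 * h + 1 - 2 * ·)) := by
    simp only [disjoint_left, mem_image, mem_Icc]
    rintro y ⟨k, hk, rfl⟩ ⟨l, hl, hkl⟩
    omega
  rw [hsplit, sum_union hdisj, sum_image fun a _ b _ hab => by simpa using hab,
    sum_image fun a _ b _ hab => by simpa using hab, sum_add_distrib]

section ReflectionOdd

variable {χ : ℤ → ℤ} {h : ℤ}

theorem sum_Icc_mul_self_eq_of_reflect (hχ : ∀ y, χ (2 * h + 1 - y) = -χ y) :
    ∑ y ∈ Icc 1 (2 * h), χ y * y =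
      2 * ∑ y ∈ Icc 1 h, χ y * y - (2 * h + 1) * ∑ y ∈ Icc 1 h, χ y := by
  rw [sum_Icc_two_mul_eq_sum_Icc_add_reflect, mul_sum, mul_sum, ← sum_sub_distrib]
  refine sum_congr rfl fun k _ => ?_
  rw [hχ]
  ring

theorem sum_Icc_mul_self_eq_of_reflect_of_two_mul (hχ : ∀ y, χ (2 * h + 1 - y) = -χ y)
    (hχ2 : ∀ y, χ (2 * y) = χ y) :
    ∑ y ∈ Icc 1 (2 * h), χ y * y =
      4 * ∑ y ∈ Icc 1 h, χ y * y - (2 * h + 1) * ∑ y ∈ Icc 1 h, χ y := by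
  rw [sum_Icc_two_mul_eq_sum_Icc_even_add_odd, mul_sum, mul_sum, ← sum_sub_distrib]
  refine sum_congr rfl fun k _ => ?_
  rw [hχ, hχ2]
  ring

theorem sum_Icc_mul_self_eq_neg_mul_sum_Icc (hχ : ∀ y, χ (2 * h + 1 - y) = -χ y)
    (hχ2 : ∀ y, χ (2 * y) = χ y) :
    ∑ y ∈ Icc 1 (2 * h), χ y * y = -(2 * h + 1) * ∑ y ∈ Icc 1 h, χ y := by
  have halves := sum_Icc_mul_self_eq_of_reflect hχ
  have parity := sum_Icc_mul_self_eq_of_reflect_of_two_mul hχ hχ2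
  linarith

end ReflectionOdd

theorem sum_filter_sub_sum_filter_not_eq_sum_mul {ι R : Type*} [Ring R] {s : Finset ι}
    {P : ι → Prop} [DecidablePred P] {χ : ι → R}
    (hχ : ∀ y ∈ s, χ y = if P y then 1 else -1) (f : ι → R) :
    ∑ y ∈ s with P y, f y - ∑ y ∈ s with ¬P y, f y = ∑ y ∈ s, χ y * f y := by
  have hsigned : ∑ y ∈ s, χ y * f y = ∑ y ∈ s, if P y then f y else -f y :=
    sum_congr rfl fun y hy => by rw [hχ y hy, ite_mul, one_mul, neg_one_mul]
  rw [hsigned, sum_ite, sum_neg_distrib, sub_eq_add_neg]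

theorem exists_sq_modEq_iff_isSquare {n : ℕ} {a : ℤ} :
    (∃ x : ℤ, x ^ 2 ≡ a [ZMOD n]) ↔ IsSquare (a : ZMod n) := by
  simp_rw [← ZMod.intCast_eq_intCast_iff]
  constructor
  · rintro ⟨x, hx⟩
    exact ⟨x, by rw [← hx]; push_cast; ring⟩
  · rintro ⟨r, hr⟩
    obtain ⟨x, rfl⟩ := ZMod.intCast_surjective r
    exact ⟨x, by push_cast; rw [hr]; ring⟩

-- The ranges in the statement elaborate to `Finset ℤ` through this monadic coercion.
open scoped Classical in
theorem bind_pure_natCast_Icc_one (m : ℕ) :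
    (do let a ← Icc 1 m; pure (a : ℤ) : Finset ℤ) = Icc 1 (m : ℤ) := by
  ext y
  simp only [bind_def, pure_def, sup_singleton_apply, mem_image, mem_Icc]
  constructor
  · rintro ⟨a, ha, rfl⟩
    omega
  · exact fun hy => ⟨y.toNat, by omega, by omega⟩

namespace legendreSym

variable (p : ℕ) [Fact p.Prime]

open scoped Classical in
theorem eq_ite_exists_sq_modEq {a : ℤ} (ha : (a : ZMod p) ≠ 0) :
    legendreSym p a = if ∃ x : ℤ, x ^ 2 ≡ a [ZMOD p] then 1 else -1 := by
  rw [exists_sq_modEq_iff_isSquare]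
  split_ifs with hsq
  · exact (eq_one_iff p ha).2 hsq
  · exact (eq_neg_one_iff p).2 hsq

theorem natCast_sub_of_mod_four_eq_three (hp : p % 4 = 3) (a : ℤ) :
    legendreSym p (p - a) = -legendreSym p a := by
  have hcast : ((p - a : ℤ) : ZMod p) = ((-a : ℤ) : ZMod p) := by simp
  rw [legendreSym, hcast, ← legendreSym, at_neg (by omega), ZMod.χ₄_nat_three_mod_four hp,
    neg_one_mul]

theorem two_mul_of_mod_eight_eq_seven (hp : p % 8 = 7) (a : ℤ) :
    legendreSym p (2 * a) = legendreSym p a := by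
  have htwo : legendreSym p 2 = 1 := by
    rw [at_two (by omega), ZMod.χ₈_nat_eq_if_mod_eight]
    simp [hp, show p % 2 = 1 by omega]
  rw [legendreSym.mul, htwo, one_mul]

end legendreSym

open scoped Classical in
/-- (Lebesgue) For a prime `p ≡ 7 (mod 8)`:
`ΣN − ΣR = p·(R_b(p) − N_b(p))`, where `ΣR`, `ΣN` are the sums of all residues /
non-residues in `[1, p-1]`, and `R_b`, `N_b` count residues / non-residues in
`[1, (p-1)/2]`. -/
theorem sum_nonresidues_sub_sum_residues_eq_of_prime_mod_eight_eq_seven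
    (p : ℕ) (hp : p.Prime) (hmod : p % 8 = 7) :
    (∑ y ∈ (Finset.Icc 1 (p - 1)).filter
        (fun y => ¬ ∃ x : ℤ, x ^ 2 ≡ (y : ℤ) [ZMOD (p : ℤ)]), (y : ℤ)) -
      (∑ y ∈ (Finset.Icc 1 (p - 1)).filter
        (fun y => ∃ x : ℤ, x ^ 2 ≡ (y : ℤ) [ZMOD (p : ℤ)]), (y : ℤ)) =
    (p : ℤ) *
      ((((Finset.Icc 1 ((p - 1) / 2)).filter
          (fun y => ∃ x : ℤ, x ^ 2 ≡ (y : ℤ) [ZMOD (p : ℤ)])).card : ℤ) -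
        (((Finset.Icc 1 ((p - 1) / 2)).filter
          (fun y => ¬ ∃ x : ℤ, x ^ 2 ≡ (y : ℤ) [ZMOD (p : ℤ)])).card : ℤ)) := by
  have := Fact.mk hp
  set h : ℕ := (p - 1) / 2
  have hp_eq : (p : ℤ) = 2 * h + 1 := by omega
  have hsymbol {m : ℕ} (hm : m < p) : ∀ y ∈ Icc (1 : ℤ) m,
      legendreSym p y = if ∃ x : ℤ, x ^ 2 ≡ y [ZMOD p] then 1 else -1 := by
    intro y hy
    rw [mem_Icc] at hy
    refine legendreSym.eq_ite_exists_sq_modEq p fun hy0 => ?_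
    have := Int.le_of_dvd (by omega) ((ZMod.intCast_zmod_eq_zero_iff_dvd y p).1 hy0)
    omega
  have hreflect : ∀ y, legendreSym p (2 * h + 1 - y) = -legendreSym p y :=
    hp_eq ▸ legendreSym.natCast_sub_of_mod_four_eq_three p (by omega)
  rw [bind_pure_natCast_Icc_one, bind_pure_natCast_Icc_one, ← neg_sub,
    sum_filter_sub_sum_filter_not_eq_sum_mul (hsymbol (by omega)), cast_card, cast_card,
    sum_filter_sub_sum_filter_not_eq_sum_mul (hsymbol (by omega)),
    show ((p - 1 : ℕ) : ℤ) = 2 * h by omega,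
    sum_Icc_mul_self_eq_neg_mul_sum_Icc hreflect (legendreSym.two_mul_of_mod_eight_eq_seven p hmod),
    hp_eq]
  simp only [mul_one, neg_mul, neg_neg]
end

section
/- Let p be a prime with p ≡ 7 (mod 8). Then the sum of the non-residues of p lying in [1, (p−1)/2] equals (p−1)(p+1)/16, i.e. ΣN_b = (p²−1)/16. -/
/-!
Write `m = (p - 1) / 2` and `χ = (· / p)`. Since `p ≡ 7 (mod 8)`, `χ(2) = 1` and `χ(-1) = -1`,
so the permutation `y ↦ ±2y mod p` of `[1, m]` multiplies `χ(y)` by `-1` exactly when `2y > m`.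
Reindexing `∑ χ(y)` along it shows `∑_{2y > m} χ(y) = 0`; reindexing `∑ χ(y) y` then gives
`∑ χ(y) y = 2 ∑ χ(y) y - p ∑_{2y > m} χ(y)`, hence `∑ χ(y) y = 0`. So residues and non-residues
in `[1, m]` have the same sum, namely half of `m (m + 1) / 2 = (p² - 1) / 8`.
-/

open Finset

theorem sum_Icc_one_id_mul_two (m : ℕ) : (∑ y ∈ Icc 1 m, y) * 2 = m * (m + 1) := by
  have h := sum_range_id_mul_two (m + 1)
  rw [range_eq_Ico, sum_eq_sum_Ico_succ_bot (by omega : 0 < m + 1), zero_add, zero_add,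
    Ico_add_one_right_eq_Icc, Nat.add_sub_cancel] at h
  rw [h, mul_comm]

theorem exists_sq_intModEq_iff_isSquare (n : ℕ) (a : ℤ) :
    (∃ x : ℤ, x ^ 2 ≡ a [ZMOD n]) ↔ IsSquare (a : ZMod n) := by
  simp_rw [← ZMod.intCast_eq_intCast_iff, Int.cast_pow]
  constructor
  · rintro ⟨x, hx⟩
    exact ⟨x, by rw [← hx, sq]⟩
  · rintro ⟨r, hr⟩
    obtain ⟨x, rfl⟩ := ZMod.intCast_surjective r
    exact ⟨x, by rw [hr, sq]⟩

/-- The representative in `[1, m]` of `±2y` modulo `2m + 1`. -/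
def foldDouble (m y : ℕ) : ℕ := if 2 * y ≤ m then 2 * y else 2 * m + 1 - 2 * y

theorem sum_comp_foldDouble {M : Type*} [AddCommMonoid M] (m : ℕ) (f : ℕ → M) :
    ∑ y ∈ Icc 1 m, f (foldDouble m y) = ∑ y ∈ Icc 1 m, f y := by
  refine sum_nbij' (foldDouble m) (fun z => if z % 2 = 0 then z / 2 else (2 * m + 1 - z) / 2)
    ?_ ?_ ?_ ?_ fun _ _ => rfl <;>
  · intro y hy
    simp only [mem_Icc, foldDouble] at *
    split_ifs <;> omega

theorem natCast_foldDouble {m y : ℕ} (hy : y ≤ m) :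
    (foldDouble m y : ℤ) = if 2 * y ≤ m then 2 * (y : ℤ) else 2 * (m : ℤ) + 1 - 2 * y := by
  have : 2 * y ≤ 2 * m + 1 := by omega
  unfold foldDouble
  split_ifs <;> push_cast [this] <;> rfl

section LegendreSymbol

variable {p : ℕ} [Fact p.Prime]

theorem legendreSym_two_eq_one_of_mod_eight (hp : p % 8 = 1 ∨ p % 8 = 7) :
    legendreSym p 2 = 1 := by
  rw [legendreSym.at_two (by omega), ZMod.χ₈_nat_eq_if_mod_eight, if_neg (by omega), if_pos hp]

theorem legendreSym_neg_of_mod_four_eq_three (hp : p % 4 = 3) (a : ℤ) :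
    legendreSym p (-a) = -legendreSym p a := by
  rw [legendreSym.at_neg (by omega), ZMod.χ₄_nat_three_mod_four hp, neg_one_mul]

theorem legendreSym_self_sub (a : ℤ) : legendreSym p (p - a) = legendreSym p (-a) := by
  rw [legendreSym.mod, legendreSym.mod p (-a), sub_eq_neg_add, Int.add_emod_right]

theorem two_mul_sum_filter_legendreSym_eq_neg_one {s : Finset ℕ} (hs : ∀ y ∈ s, ¬p ∣ y) :
    2 * ∑ y ∈ s with legendreSym p (y : ℕ) = -1, (y : ℤ) =
      ∑ y ∈ s, (y : ℤ) - ∑ y ∈ s, legendreSym p y * y := by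
  rw [mul_sum, sum_filter, ← sum_sub_distrib]
  refine sum_congr rfl fun y hy => ?_
  have hy0 : ((y : ℤ) : ZMod p) ≠ 0 := by
    rw [Int.cast_natCast, Ne, ZMod.natCast_eq_zero_iff]
    exact hs y hy
  rcases legendreSym.eq_one_or_neg_one p hy0 with h | h <;> simp [h]
  ring

variable {m : ℕ}

theorem legendreSym_foldDouble (hp : p % 8 = 7) (hpm : p = 2 * m + 1) {y : ℕ} (hy : y ≤ m) :
    legendreSym p (foldDouble m y) =
      if 2 * y ≤ m then legendreSym p y else -legendreSym p y := by
  rw [natCast_foldDouble hy]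
  split_ifs
  · rw [legendreSym.mul, legendreSym_two_eq_one_of_mod_eight (Or.inr hp), one_mul]
  · rw [show (2 * m + 1 : ℤ) = p by omega, legendreSym_self_sub,
      legendreSym_neg_of_mod_four_eq_three (by omega), legendreSym.mul,
      legendreSym_two_eq_one_of_mod_eight (Or.inr hp), one_mul]

theorem sum_legendreSym_Icc_filter_half_lt_eq_zero (hp : p % 8 = 7) (hpm : p = 2 * m + 1) :
    ∑ y ∈ Icc 1 m with m < 2 * y, legendreSym p y = 0 := by
  have h := sum_comp_foldDouble m (fun y => legendreSym p y)
  have hterm : ∀ y ∈ Icc 1 m, legendreSym p (foldDouble m y) =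
      legendreSym p y - 2 * if m < 2 * y then legendreSym p y else 0 := by
    intro y hy
    rw [legendreSym_foldDouble hp hpm (mem_Icc.1 hy).2]
    split_ifs <;> omega
  rw [sum_congr rfl hterm, sum_sub_distrib, ← mul_sum, ← sum_filter] at h
  linarith

theorem sum_legendreSym_mul_Icc_eq_zero (hp : p % 8 = 7) (hpm : p = 2 * m + 1) :
    ∑ y ∈ Icc 1 m, legendreSym p y * y = 0 := by
  have h := sum_comp_foldDouble m (fun y => legendreSym p y * y)
  have hterm : ∀ y ∈ Icc 1 m, legendreSym p (foldDouble m y) * (foldDouble m y : ℤ) =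
      2 * (legendreSym p y * y) - p * if m < 2 * y then legendreSym p y else 0 := by
    intro y hy
    rw [legendreSym_foldDouble hp hpm (mem_Icc.1 hy).2, natCast_foldDouble (mem_Icc.1 hy).2,
      show (p : ℤ) = 2 * m + 1 by omega]
    split_ifs <;> first | omega | ring
  rw [sum_congr rfl hterm, sum_sub_distrib, ← mul_sum, ← mul_sum, ← sum_filter,
    sum_legendreSym_Icc_filter_half_lt_eq_zero hp hpm] at h
  linarith

theorem four_mul_sum_filter_legendreSym_Icc_eq_neg_one (hp : p % 8 = 7)
    (hpm : p = 2 * m + 1) :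
    4 * ∑ y ∈ Icc 1 m with legendreSym p (y : ℕ) = -1, (y : ℤ) = (m : ℤ) * (m + 1) := by
  have hs : ∀ y ∈ Icc 1 m, ¬p ∣ y := fun y hy hdvd => by
    have := Nat.le_of_dvd (mem_Icc.1 hy).1 hdvd
    rw [mem_Icc] at hy
    omega
  have hgauss : (∑ y ∈ Icc 1 m, (y : ℤ)) * 2 = (m : ℤ) * (m + 1) := by
    rw [← Nat.cast_sum]
    exact_mod_cast sum_Icc_one_id_mul_two m
  have h := two_mul_sum_filter_legendreSym_eq_neg_one hs
  rw [sum_legendreSym_mul_Icc_eq_zero hp hpm, sub_zero] at h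
  linarith

end LegendreSymbol

open scoped Classical in
/-- For a prime `p ≡ 7 (mod 8)`, the sum of the non-residues of `p`
in `[1, (p-1)/2]` equals `(p² - 1)/16`. -/
theorem sum_small_nonresidues_eq_of_prime_mod_eight_eq_seven
    (p : ℕ) (hp : p.Prime) (hmod : p % 8 = 7) :
    ∑ y ∈ (Finset.Icc 1 ((p - 1) / 2)).filter
        (fun y => ¬ ∃ x : ℤ, x ^ 2 ≡ (y : ℤ) [ZMOD (p : ℤ)]), y =
      (p ^ 2 - 1) / 16 := by
  have := Fact.mk hp
  obtain ⟨m, hm⟩ : ∃ m, (p - 1) / 2 = m := ⟨_, rfl⟩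
  have hpm : p = 2 * m + 1 := by omega
  -- `(y : ℤ)` in the statement lifts `Icc 1 m` to a `Finset ℤ` through the `Finset` monad
  simp only [hm, bind_pure_comp, fmap_def, filter_image]
  simp only [sum_image fun _ _ _ _ h => Nat.cast_injective h]
  rw [filter_congr (q := fun y : ℕ => legendreSym p y = -1) fun y _ => by
    rw [exists_sq_intModEq_iff_isSquare, legendreSym.eq_neg_one_iff]]
  have hsq : (p : ℤ) ^ 2 - 1 = 4 * (m * (m + 1)) := by
    rw [hpm]
    push_cast
    ring
  rw [hsq, ← four_mul_sum_filter_legendreSym_Icc_eq_neg_one hmod hpm]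
  omega
end
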